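/- Let k > 2 and let G_k(n, ℓ, j_1, j_2) denote the number of k-noncrossing partial matchings on {1,…,n} with exactly ℓ isolated vertices, exactly j_1 1-arcs and exactly j_2 2-arcs. Then for all b_1, b_2 ≥ 0, Σ_{j_1 ≥ b_1, j_2 ≥ b_2} C(j_1, b_1)·C(j_2, b_2)·G_k(n, ℓ, j_1, j_2) = λ(n, b_1, b_2) · f_k(n − 2(b_1 + b_2), ℓ), where λ(n, b_1, b_2) is the number of ways to select b_1 1-arcs and b_2 2-arcs over {1,…,n} that are pairwise vertex-disjoint, and C(·,·) is the binomial coefficient. -/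

import Mathlib

/-- A set of arcs (ordered pairs of vertices) is pairwise vertex-disjoint. -/
def ArcsDisjoint (M : Finset (ℕ × ℕ)) : Prop :=
  ∀ p ∈ M, ∀ q ∈ M, p ≠ q → p.1 ≠ q.1 ∧ p.1 ≠ q.2 ∧ p.2 ≠ q.1 ∧ p.2 ≠ q.2

/-- `M` is a partial matching on `{1,…,n}`: arcs `(i,j)` with `1 ≤ i < j ≤ n`,
every vertex in at most one arc. -/
def IsPartialMatching (n : ℕ) (M : Finset (ℕ × ℕ)) : Prop :=
  (∀ p ∈ M, 1 ≤ p.1 ∧ p.1 < p.2 ∧ p.2 ≤ n) ∧ ArcsDisjoint M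

/-- `M` contains `k` mutually crossing arcs
`(i₁,j₁),…,(i_k,j_k)` with `i₁ < ⋯ < i_k < j₁ < ⋯ < j_k`. -/
def HasKCrossing (k : ℕ) (M : Finset (ℕ × ℕ)) : Prop :=
  ∃ f : Fin k → ℕ × ℕ, (∀ r, f r ∈ M) ∧
    (StrictMono fun r => (f r).1) ∧ (StrictMono fun r => (f r).2) ∧
    ∀ r s : Fin k, (f r).1 < (f s).2

/-- `M` is `k`-noncrossing. -/
def KNoncrossing (k : ℕ) (M : Finset (ℕ × ℕ)) : Prop := ¬ HasKCrossing k M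

/-- The number of isolated vertices of `M` in `{1,…,n}`. -/
def isolatedCount (n : ℕ) (M : Finset (ℕ × ℕ)) : ℕ :=
  ((Finset.Icc 1 n).filter fun v => ∀ p ∈ M, p.1 ≠ v ∧ p.2 ≠ v).card

/-- `fMatch k n ℓ`: the number of `k`-noncrossing partial matchings on `{1,…,n}`
with exactly `ℓ` isolated vertices. -/
noncomputable def fMatch (k n ℓ : ℕ) : ℕ :=
  Nat.card {M : Finset (ℕ × ℕ) //
    IsPartialMatching n M ∧ KNoncrossing k M ∧ isolatedCount n M = ℓ}

/-- `p` is a 1-arc over `{1,…,n}`, i.e. `p = (i, i+1)` with `1 ≤ i ≤ n-1`. -/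
def IsOneArc (n : ℕ) (p : ℕ × ℕ) : Prop :=
  1 ≤ p.1 ∧ p.1 + 1 ≤ n ∧ p.2 = p.1 + 1

/-- `p` is a 2-arc over `{1,…,n}`, i.e. `p = (i, i+2)` with `1 ≤ i ≤ n-2`. -/
def IsTwoArc (n : ℕ) (p : ℕ × ℕ) : Prop :=
  1 ≤ p.1 ∧ p.1 + 2 ≤ n ∧ p.2 = p.1 + 2

/-- `λ(n, b₁, b₂)`: the number of ways to select `b₁` 1-arcs and `b₂` 2-arcs
over `{1,…,n}` such that all selected arcs are pairwise vertex-disjoint. -/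
noncomputable def lamSel (n b₁ b₂ : ℕ) : ℕ :=
  Nat.card {A : Finset (ℕ × ℕ) //
    (∀ p ∈ A, IsOneArc n p ∨ IsTwoArc n p) ∧ ArcsDisjoint A ∧
    (A.filter fun p => p.2 = p.1 + 1).card = b₁ ∧
    (A.filter fun p => p.2 = p.1 + 2).card = b₂}

/-- `G_k(n,ℓ,j₁,j₂)`: the number of `k`-noncrossing partial matchings on
`{1,…,n}` with exactly `ℓ` isolated vertices, exactly `j₁` 1-arcs and exactly
`j₂` 2-arcs. -/
noncomputable def GCount₂ (k n ℓ j₁ j₂ : ℕ) : ℕ :=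
  Nat.card {M : Finset (ℕ × ℕ) //
    IsPartialMatching n M ∧ KNoncrossing k M ∧ isolatedCount n M = ℓ ∧
    (M.filter fun p => p.2 = p.1 + 1).card = j₁ ∧
    (M.filter fun p => p.2 = p.1 + 2).card = j₂}

/-!
Double counting. The left side counts triples `(M, S₁, S₂)` where `M` is a `k`-noncrossing
matching with `ℓ` isolated vertices and `S₁`, `S₂` are sets of `b₁` of its 1-arcs and `b₂` of
its 2-arcs, that is, pairs `(A, M)` with `A = S₁ ∪ S₂` a selection counted by `λ(n, b₁, b₂)` and
`A ⊆ M`. For fixed `A`, deleting `A` from `M` and relabelling the `n - 2(b₁ + b₂)` vertices left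
free by `A` in increasing order is a bijection onto the `k`-noncrossing matchings on
`{1,…,n - 2(b₁ + b₂)}` with `ℓ` isolated vertices. Relabelling is order preserving, and since
`k ≥ 3` every arc of a `k`-crossing has length at least `3`, so the arcs of `A` never take part
in a `k`-crossing.
-/

namespace KNoncrossingMatching

open Finset

section Rank

variable {C : Finset ℕ}

noncomputable def unrank (C : Finset ℕ) (w : ℕ) : ℕ :=
  if h : w - 1 < #C then (C.orderIsoOfFin rfl ⟨w - 1, h⟩ : ℕ) else 0

noncomputable def rank (C : Finset ℕ) (v : ℕ) : ℕ :=
  if h : v ∈ C then ((C.orderIsoOfFin rfl).symm ⟨v, h⟩ : ℕ) + 1 else 0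

lemma unrank_of_mem {w : ℕ} (hw : w ∈ Icc 1 #C) :
    unrank C w = (C.orderIsoOfFin rfl ⟨w - 1, by grind⟩ : ℕ) := by
  rw [unrank, dif_pos]

lemma unrank_mapsTo : Set.MapsTo (unrank C) ↑(Icc 1 #C) ↑C := fun w hw => by
  rw [mem_coe, unrank_of_mem hw]
  exact Subtype.prop _

lemma rank_mapsTo : Set.MapsTo (rank C) ↑C ↑(Icc 1 #C) := fun v hv => by
  rw [mem_coe] at hv
  rw [mem_coe, mem_Icc, rank, dif_pos hv]
  exact ⟨by omega, Fin.is_lt _⟩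

lemma rank_unrank : Set.LeftInvOn (rank C) (unrank C) ↑(Icc 1 #C) := fun w hw => by
  have hmem := mem_coe.mp (unrank_mapsTo hw)
  have hsub : (⟨unrank C w, hmem⟩ : C) = C.orderIsoOfFin rfl ⟨w - 1, by grind⟩ :=
    Subtype.ext (unrank_of_mem hw)
  rw [rank, dif_pos hmem, hsub, OrderIso.symm_apply_apply]
  grind

lemma unrank_rank : Set.LeftInvOn (unrank C) (rank C) ↑C := fun v hv => by
  rw [unrank_of_mem (rank_mapsTo hv)]
  simp [rank, dif_pos (mem_coe.mp hv)]

lemma unrank_strictMonoOn : StrictMonoOn (unrank C) ↑(Icc 1 #C) := fun a ha b hb hab => by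
  rw [unrank_of_mem ha, unrank_of_mem hb, Subtype.coe_lt_coe, OrderIso.lt_iff_lt, Fin.mk_lt_mk]
  grind

lemma rank_strictMonoOn : StrictMonoOn (rank C) ↑C := fun a ha b hb hab => by
  rw [mem_coe] at ha hb
  rw [rank, rank, dif_pos ha, dif_pos hb, add_lt_add_iff_right, Fin.val_fin_lt,
    OrderIso.lt_iff_lt, Subtype.mk_lt_mk]
  exact hab

end Rank

section Arcs

variable {S T : Finset ℕ} {A B M N : Finset (ℕ × ℕ)} {g : ℕ → ℕ}

def verts (M : Finset (ℕ × ℕ)) : Finset ℕ := M.biUnion fun p => {p.1, p.2}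

lemma mem_verts {v : ℕ} : v ∈ verts M ↔ ∃ p ∈ M, v = p.1 ∨ v = p.2 := by
  simp [verts]

lemma fst_mem_verts {p : ℕ × ℕ} (hp : p ∈ M) : p.1 ∈ verts M := mem_verts.2 ⟨p, hp, .inl rfl⟩

lemma snd_mem_verts {p : ℕ × ℕ} (hp : p ∈ M) : p.2 ∈ verts M := mem_verts.2 ⟨p, hp, .inr rfl⟩

lemma verts_mono (hNM : N ⊆ M) : verts N ⊆ verts M := biUnion_subset_biUnion_of_subset_left _ hNM

lemma verts_union : verts (A ∪ B) = verts A ∪ verts B := union_biUnion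

lemma verts_image_prodMap : verts (M.image (Prod.map g g)) = (verts M).image g := by
  ext v
  simp only [mem_verts, mem_image, Prod.exists, Prod.map_apply]
  grind

lemma disjoint_of_disjoint_verts (h : Disjoint (verts A) (verts B)) : Disjoint A B :=
  disjoint_left.2 fun _ hpA hpB => disjoint_left.1 h (fst_mem_verts hpA) (fst_mem_verts hpB)

lemma ArcsDisjoint.mono (hM : ArcsDisjoint M) (hNM : N ⊆ M) : ArcsDisjoint N :=
  fun p hp q hq => hM p (hNM hp) q (hNM hq)

lemma ArcsDisjoint.union (hA : ArcsDisjoint A) (hB : ArcsDisjoint B)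
    (hAB : Disjoint (verts A) (verts B)) : ArcsDisjoint (A ∪ B) := by
  have hne : ∀ x ∈ verts A, ∀ y ∈ verts B, x ≠ y := fun x hx y hy hxy =>
    disjoint_left.1 hAB hx (hxy ▸ hy)
  intro p hp q hq hpq
  rcases mem_union.1 hp with hp | hp <;> rcases mem_union.1 hq with hq | hq
  · exact hA p hp q hq hpq
  · exact ⟨hne _ (fst_mem_verts hp) _ (fst_mem_verts hq), hne _ (fst_mem_verts hp) _
      (snd_mem_verts hq), hne _ (snd_mem_verts hp) _ (fst_mem_verts hq), hne _
      (snd_mem_verts hp) _ (snd_mem_verts hq)⟩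
  · exact ⟨(hne _ (fst_mem_verts hq) _ (fst_mem_verts hp)).symm, (hne _ (snd_mem_verts hq) _
      (fst_mem_verts hp)).symm, (hne _ (fst_mem_verts hq) _ (snd_mem_verts hp)).symm, (hne _
      (snd_mem_verts hq) _ (snd_mem_verts hp)).symm⟩
  · exact hB p hp q hq hpq

lemma ArcsDisjoint.disjoint_verts_sdiff (hM : ArcsDisjoint M) (hAM : A ⊆ M) :
    Disjoint (verts A) (verts (M \ A)) := by
  refine disjoint_left.2 fun v hvA hv => ?_
  obtain ⟨q, hqA, hvq⟩ := mem_verts.1 hvA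
  obtain ⟨p, hp, hvp⟩ := mem_verts.1 hv
  obtain ⟨hpM, hpA⟩ := mem_sdiff.1 hp
  have := hM p hpM q (hAM hqA) (ne_of_mem_of_not_mem hqA hpA).symm
  omega

structure IsMatchingOn (S : Finset ℕ) (M : Finset (ℕ × ℕ)) : Prop where
  lt : ∀ p ∈ M, p.1 < p.2
  verts_subset : verts M ⊆ S
  arcsDisjoint : ArcsDisjoint M

lemma isPartialMatching_iff_isMatchingOn {n : ℕ} :
    IsPartialMatching n M ↔ IsMatchingOn (Icc 1 n) M := by
  refine ⟨fun ⟨hb, hd⟩ => ⟨fun p hp => (hb p hp).2.1, fun v hv => ?_, hd⟩,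
    fun ⟨hlt, hS, hd⟩ => ⟨fun p hp => ?_, hd⟩⟩
  · obtain ⟨p, hp, hv⟩ := mem_verts.1 hv
    have := hb p hp
    grind
  · have h1 := mem_Icc.1 (hS (fst_mem_verts hp))
    have h2 := mem_Icc.1 (hS (snd_mem_verts hp))
    exact ⟨h1.1, hlt p hp, h2.2⟩

namespace IsMatchingOn

lemma card_verts (hM : IsMatchingOn S M) : #(verts M) = 2 * #M := by
  rw [verts, card_biUnion, sum_const_nat fun p hp => card_pair (hM.lt p hp).ne, mul_comm]
  intro p hp q hq hpq
  have := hM.arcsDisjoint p hp q hq hpq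
  simp only [disjoint_left, mem_insert, mem_singleton]
  omega

lemma mono (hM : IsMatchingOn S M) (hST : S ⊆ T) : IsMatchingOn T M :=
  ⟨hM.lt, hM.verts_subset.trans hST, hM.arcsDisjoint⟩

lemma sdiff (hM : IsMatchingOn S M) (hAM : A ⊆ M) : IsMatchingOn (S \ verts A) (M \ A) where
  lt p hp := hM.lt p (mem_sdiff.1 hp).1
  verts_subset := subset_sdiff.2 ⟨(verts_mono sdiff_subset).trans hM.verts_subset,
    (ArcsDisjoint.disjoint_verts_sdiff hM.arcsDisjoint hAM).symm⟩
  arcsDisjoint := ArcsDisjoint.mono hM.arcsDisjoint sdiff_subset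

lemma union (hA : IsMatchingOn S A) (hB : IsMatchingOn T B) (hST : Disjoint S T) :
    IsMatchingOn (S ∪ T) (A ∪ B) where
  lt p hp := (mem_union.1 hp).elim (hA.lt p) (hB.lt p)
  verts_subset := verts_union ▸ union_subset_union hA.verts_subset hB.verts_subset
  arcsDisjoint := ArcsDisjoint.union hA.arcsDisjoint hB.arcsDisjoint
    (hST.mono hA.verts_subset hB.verts_subset)

lemma image (hM : IsMatchingOn S M) (hg : StrictMonoOn g S) (hgST : Set.MapsTo g S T) :
    IsMatchingOn T (M.image (Prod.map g g)) where
  lt := by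
    simp only [mem_image, forall_exists_index, and_imp]
    rintro _ p hp rfl
    exact hg (hM.verts_subset (fst_mem_verts hp)) (hM.verts_subset (snd_mem_verts hp))
      (hM.lt p hp)
  verts_subset := by
    rw [verts_image_prodMap, image_subset_iff]
    exact fun v hv => hgST (hM.verts_subset hv)
  arcsDisjoint := by
    simp only [ArcsDisjoint, mem_image, forall_exists_index, and_imp]
    rintro _ p hp rfl _ q hq rfl hpq
    have hinj {a b : ℕ} (ha : a ∈ verts M) (hb : b ∈ verts M) (hab : a ≠ b) : g a ≠ g b :=
      hg.injOn.ne (hM.verts_subset ha) (hM.verts_subset hb) hab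
    have := hM.arcsDisjoint p hp q hq (by rintro rfl; exact hpq rfl)
    exact ⟨hinj (fst_mem_verts hp) (fst_mem_verts hq) this.1, hinj (fst_mem_verts hp)
      (snd_mem_verts hq) this.2.1, hinj (snd_mem_verts hp) (fst_mem_verts hq) this.2.2.1,
      hinj (snd_mem_verts hp) (snd_mem_verts hq) this.2.2.2⟩

end IsMatchingOn

end Arcs

section Crossing

variable {k : ℕ} {S : Finset ℕ} {A B M : Finset (ℕ × ℕ)} {g : ℕ → ℕ}

lemma HasKCrossing.mono (h : HasKCrossing k A) (hAB : A ⊆ B) : HasKCrossing k B :=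
  let ⟨f, hf, h₁, h₂, hcr⟩ := h
  ⟨f, fun r => hAB (hf r), h₁, h₂, hcr⟩

/-- Each of the other `k - 1` arcs of a `k`-crossing has an endpoint strictly inside the arc
`f r`: the right end if it lies before `f r`, the left end otherwise. -/
lemma fst_add_le_snd_of_crossing {f : Fin k → ℕ × ℕ} (h₁ : StrictMono fun r => (f r).1)
    (h₂ : StrictMono fun r => (f r).2) (hcr : ∀ r s, (f r).1 < (f s).2) (r : Fin k) :
    (f r).1 + k ≤ (f r).2 := by
  set inner : Fin k → ℕ := fun u => if u < r then (f u).2 else (f u).1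
  have hinner : ∀ u ∈ univ.erase r, inner u ∈ Ioo (f r).1 (f r).2 := by
    intro u hu
    rcases lt_or_gt_of_ne (ne_of_mem_erase hu) with hur | hru
    · simpa [inner, hur] using ⟨hcr r u, h₂ hur⟩
    · simpa [inner, hru.not_gt] using ⟨h₁ hru, hcr u r⟩
  have hinj : Function.Injective inner := .of_lt_imp_ne fun u v huv => by
    by_cases hv : v < r
    · simpa [inner, huv.trans hv, hv] using (h₂ huv).ne
    · by_cases hu : u < r
      · simpa [inner, hu, hv] using (hcr v u).ne'
      · simpa [inner, hu, hv] using (h₁ huv).ne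
  have := card_le_card_of_injOn inner hinner hinj.injOn
  rw [card_erase_of_mem (mem_univ r), card_univ, Fintype.card_fin, Nat.card_Ioo] at this
  have := hcr r r
  omega

lemma hasKCrossing_union_iff_of_short (hA : ∀ p ∈ A, p.2 < p.1 + k) :
    HasKCrossing k (A ∪ B) ↔ HasKCrossing k B := by
  refine ⟨fun ⟨f, hf, h₁, h₂, hcr⟩ => ⟨f, fun r => ?_, h₁, h₂, hcr⟩,
    fun h => HasKCrossing.mono h subset_union_right⟩
  have := fst_add_le_snd_of_crossing h₁ h₂ hcr r
  exact (mem_union.1 (hf r)).resolve_left fun hr => by have := hA _ hr; omega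

lemma hasKCrossing_image_iff (hM : verts M ⊆ S) (hg : StrictMonoOn g S) :
    HasKCrossing k (M.image (Prod.map g g)) ↔ HasKCrossing k M := by
  have hlt {a b : ℕ} (ha : a ∈ verts M) (hb : b ∈ verts M) : g a < g b ↔ a < b :=
    hg.lt_iff_lt (hM ha) (hM hb)
  constructor
  · rintro ⟨f, hf, h₁, h₂, hcr⟩
    choose p hp hpf using fun r => mem_image.1 (hf r)
    simp only [← hpf, Prod.map_fst, Prod.map_snd] at h₁ h₂ hcr
    refine ⟨p, hp, fun r s hrs => ?_, fun r s hrs => ?_, fun r s => ?_⟩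
    · exact (hlt (fst_mem_verts (hp r)) (fst_mem_verts (hp s))).1 (h₁ hrs)
    · exact (hlt (snd_mem_verts (hp r)) (snd_mem_verts (hp s))).1 (h₂ hrs)
    · exact (hlt (fst_mem_verts (hp r)) (snd_mem_verts (hp s))).1 (hcr r s)
  · rintro ⟨f, hf, h₁, h₂, hcr⟩
    refine ⟨Prod.map g g ∘ f, fun r => mem_image_of_mem _ (hf r), fun r s hrs => ?_,
      fun r s hrs => ?_, fun r s => ?_⟩
    · exact (hlt (fst_mem_verts (hf r)) (fst_mem_verts (hf s))).2 (h₁ hrs)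
    · exact (hlt (snd_mem_verts (hf r)) (snd_mem_verts (hf s))).2 (h₂ hrs)
    · exact (hlt (fst_mem_verts (hf r)) (snd_mem_verts (hf s))).2 (hcr r s)

end Crossing

section Contraction

variable {k n : ℕ} {A M N : Finset (ℕ × ℕ)}

def freeVerts (n : ℕ) (A : Finset (ℕ × ℕ)) : Finset ℕ := Icc 1 n \ verts A

lemma isolatedCount_eq_card_freeVerts : isolatedCount n M = #(freeVerts n M) := by
  rw [isolatedCount, freeVerts]
  congr 1
  ext v
  simp only [mem_filter, mem_sdiff, mem_verts]
  grind

lemma IsMatchingOn.card_freeVerts (hM : IsMatchingOn (Icc 1 n) M) :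
    #(freeVerts n M) = n - 2 * #M := by
  rw [freeVerts, card_sdiff_of_subset hM.verts_subset, hM.card_verts, Nat.card_Icc,
    Nat.add_sub_cancel]

lemma IsMatchingOn.isolatedCount (hM : IsMatchingOn (Icc 1 n) M) :
    isolatedCount n M = n - 2 * #M := by
  rw [isolatedCount_eq_card_freeVerts, hM.card_freeVerts]

noncomputable def contract (n : ℕ) (A M : Finset (ℕ × ℕ)) : Finset (ℕ × ℕ) :=
  (M \ A).image (Prod.map (rank (freeVerts n A)) (rank (freeVerts n A)))

noncomputable def expand (n : ℕ) (A N : Finset (ℕ × ℕ)) : Finset (ℕ × ℕ) :=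
  A ∪ N.image (Prod.map (unrank (freeVerts n A)) (unrank (freeVerts n A)))

lemma IsMatchingOn.contract (hM : IsMatchingOn (Icc 1 n) M) (hAM : A ⊆ M) :
    IsMatchingOn (Icc 1 #(freeVerts n A)) (contract n A M) :=
  (hM.sdiff hAM).image rank_strictMonoOn rank_mapsTo

lemma IsMatchingOn.image_unrank (hN : IsMatchingOn (Icc 1 #(freeVerts n A)) N) :
    IsMatchingOn (freeVerts n A)
      (N.image (Prod.map (unrank (freeVerts n A)) (unrank (freeVerts n A)))) :=
  hN.image unrank_strictMonoOn unrank_mapsTo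

lemma disjoint_image_unrank (hN : IsMatchingOn (Icc 1 #(freeVerts n A)) N) :
    Disjoint A (N.image (Prod.map (unrank (freeVerts n A)) (unrank (freeVerts n A)))) :=
  disjoint_of_disjoint_verts (disjoint_sdiff.mono_right hN.image_unrank.verts_subset)

lemma IsMatchingOn.expand (hA : IsMatchingOn (Icc 1 n) A)
    (hN : IsMatchingOn (Icc 1 #(freeVerts n A)) N) : IsMatchingOn (Icc 1 n) (expand n A N) :=
  (IsMatchingOn.union ⟨hA.lt, subset_rfl, hA.arcsDisjoint⟩ hN.image_unrank disjoint_sdiff).mono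
    (union_subset hA.verts_subset sdiff_subset)

lemma card_expand (hN : IsMatchingOn (Icc 1 #(freeVerts n A)) N) :
    #(expand n A N) = #A + #N := by
  have hinj : Set.InjOn (unrank (freeVerts n A)) (verts N) :=
    unrank_strictMonoOn.injOn.mono hN.verts_subset
  rw [expand, card_union_of_disjoint (disjoint_image_unrank hN), card_image_of_injOn]
  intro p hp q hq hpq
  exact Prod.ext (hinj (fst_mem_verts hp) (fst_mem_verts hq) (congrArg Prod.fst hpq))
    (hinj (snd_mem_verts hp) (snd_mem_verts hq) (congrArg Prod.snd hpq))

lemma isolatedCount_expand (hA : IsMatchingOn (Icc 1 n) A)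
    (hN : IsMatchingOn (Icc 1 #(freeVerts n A)) N) :
    isolatedCount n (expand n A N) = isolatedCount #(freeVerts n A) N := by
  rw [(hA.expand hN).isolatedCount, hN.isolatedCount, card_expand hN, hA.card_freeVerts]
  omega

lemma hasKCrossing_expand_iff (hA : ∀ p ∈ A, p.2 < p.1 + k)
    (hN : IsMatchingOn (Icc 1 #(freeVerts n A)) N) :
    HasKCrossing k (expand n A N) ↔ HasKCrossing k N :=
  (hasKCrossing_union_iff_of_short hA).trans
    (hasKCrossing_image_iff hN.verts_subset unrank_strictMonoOn)

lemma expand_contract (hM : IsMatchingOn (Icc 1 n) M) (hAM : A ⊆ M) :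
    expand n A (contract n A M) = M := by
  have hfree := (hM.sdiff hAM).verts_subset
  rw [expand, contract, image_image, image_congr, image_id, union_sdiff_of_subset hAM]
  exact fun p hp =>
    Prod.ext (unrank_rank (hfree (fst_mem_verts hp))) (unrank_rank (hfree (snd_mem_verts hp)))

lemma contract_expand (hN : IsMatchingOn (Icc 1 #(freeVerts n A)) N) :
    contract n A (expand n A N) = N := by
  rw [contract, expand, union_sdiff_cancel_left (disjoint_image_unrank hN), image_image,
    image_congr, image_id]
  exact fun p hp => Prod.ext (rank_unrank (hN.verts_subset (fst_mem_verts hp)))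
    (rank_unrank (hN.verts_subset (snd_mem_verts hp)))

end Contraction

lemma card_filter_powerset_filter_or {α : Type*} [DecidableEq α] {s : Finset α}
    {P Q : α → Prop} [DecidablePred P] [DecidablePred Q] (hPQ : ∀ a ∈ s, P a → ¬ Q a)
    (b₁ b₂ : ℕ) :
    #{A ∈ {a ∈ s | P a ∨ Q a}.powerset | #{a ∈ A | P a} = b₁ ∧ #{a ∈ A | Q a} = b₂} =
      (#{a ∈ s | P a}).choose b₁ * (#{a ∈ s | Q a}).choose b₂ := by
  have hsplit {S₁ S₂ : Finset α} (h₁ : S₁ ⊆ {a ∈ s | P a}) (h₂ : S₂ ⊆ {a ∈ s | Q a}) :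
      {a ∈ S₁ ∪ S₂ | P a} = S₁ ∧ {a ∈ S₁ ∪ S₂ | Q a} = S₂ := by
    simp only [subset_iff, mem_filter] at h₁ h₂
    refine ⟨?_, ?_⟩ <;> ext a <;> simp only [mem_filter, mem_union] <;> grind
  rw [← card_powersetCard, ← card_powersetCard, ← card_product]
  refine card_nbij' (fun A => ({a ∈ A | P a}, {a ∈ A | Q a})) (fun S => S.1 ∪ S.2)
    (fun A hA => ?_) (fun S hS => ?_) (fun A hA => ?_) (fun S hS => ?_) <;>
    simp only [mem_coe, mem_filter, mem_powerset, mem_product, mem_powersetCard] at *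
  · exact ⟨⟨filter_subset_filter _ (hA.1.trans (filter_subset _ _)), hA.2.1⟩,
      filter_subset_filter _ (hA.1.trans (filter_subset _ _)), hA.2.2⟩
  · rw [(hsplit hS.1.1 hS.2.1).1, (hsplit hS.1.1 hS.2.1).2]
    exact ⟨union_subset (hS.1.1.trans (monotone_filter_right _ fun _ _ => .inl))
      (hS.2.1.trans (monotone_filter_right _ fun _ _ => .inr)), hS.1.2, hS.2.2⟩
  · rw [← filter_or, filter_true_of_mem fun a ha => mem_filter.1 (hA.1 ha) |>.2]
  · rw [(hsplit hS.1.1 hS.2.1).1, (hsplit hS.1.1 hS.2.1).2]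

section Counting

variable {k n ℓ b₁ b₂ : ℕ} {A M : Finset (ℕ × ℕ)}

def arcSets (n : ℕ) : Finset (Finset (ℕ × ℕ)) := (Icc 1 n ×ˢ Icc 1 n).powerset

lemma mem_arcSets : M ∈ arcSets n ↔ verts M ⊆ Icc 1 n := by
  simp only [arcSets, mem_powerset, subset_iff, mem_product, mem_verts]
  grind

lemma natCard_eq_card_filter_arcSets {P : Finset (ℕ × ℕ) → Prop} [DecidablePred P]
    (hP : ∀ M, P M → verts M ⊆ Icc 1 n) : Nat.card {M // P M} = #{M ∈ arcSets n | P M} := by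
  rw [← Nat.card_eq_finsetCard]
  exact Nat.card_congr <| .subtypeEquivRight fun M => by
    rw [mem_filter, mem_arcSets]
    exact ⟨fun h => ⟨hP M h, h⟩, And.right⟩

def arcsOfLength (d : ℕ) (M : Finset (ℕ × ℕ)) : Finset (ℕ × ℕ) := {p ∈ M | p.2 = p.1 + d}

open Classical in
noncomputable def kMatchings (k n ℓ : ℕ) : Finset (Finset (ℕ × ℕ)) :=
  {M ∈ arcSets n | IsPartialMatching n M ∧ KNoncrossing k M ∧ isolatedCount n M = ℓ}

lemma mem_kMatchings :
    M ∈ kMatchings k n ℓ ↔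
      IsMatchingOn (Icc 1 n) M ∧ KNoncrossing k M ∧ isolatedCount n M = ℓ := by
  classical
  rw [kMatchings, mem_filter, mem_arcSets, isPartialMatching_iff_isMatchingOn]
  exact ⟨And.right, fun h => ⟨h.1.verts_subset, h⟩⟩

lemma fMatch_eq_card : fMatch k n ℓ = #(kMatchings k n ℓ) := by
  classical
  rw [fMatch, natCard_eq_card_filter_arcSets fun M hM =>
    (isPartialMatching_iff_isMatchingOn.1 hM.1).verts_subset, kMatchings]

lemma GCount₂_eq_card (j₁ j₂ : ℕ) :
    GCount₂ k n ℓ j₁ j₂ =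
      #{M ∈ kMatchings k n ℓ | (#(arcsOfLength 1 M), #(arcsOfLength 2 M)) = (j₁, j₂)} := by
  classical
  rw [GCount₂, natCard_eq_card_filter_arcSets fun M hM =>
    (isPartialMatching_iff_isMatchingOn.1 hM.1).verts_subset, kMatchings, filter_filter]
  simp only [Prod.mk.injEq, and_assoc, arcsOfLength]

lemma isOneArc_or_isTwoArc_iff {p : ℕ × ℕ} :
    IsOneArc n p ∨ IsTwoArc n p ↔ 1 ≤ p.1 ∧ p.2 ≤ n ∧ (p.2 = p.1 + 1 ∨ p.2 = p.1 + 2) := by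
  simp only [IsOneArc, IsTwoArc]
  omega

lemma verts_subset_of_isOneArc_or_isTwoArc (hA : ∀ p ∈ A, IsOneArc n p ∨ IsTwoArc n p) :
    verts A ⊆ Icc 1 n := fun v hv => by
  obtain ⟨p, hp, hv⟩ := mem_verts.1 hv
  have := isOneArc_or_isTwoArc_iff.1 (hA p hp)
  rw [mem_Icc]
  omega

open Classical in
noncomputable def selections (n b₁ b₂ : ℕ) : Finset (Finset (ℕ × ℕ)) :=
  {A ∈ arcSets n | (∀ p ∈ A, IsOneArc n p ∨ IsTwoArc n p) ∧ ArcsDisjoint A ∧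
    #(arcsOfLength 1 A) = b₁ ∧ #(arcsOfLength 2 A) = b₂}

lemma mem_selections :
    A ∈ selections n b₁ b₂ ↔ (∀ p ∈ A, IsOneArc n p ∨ IsTwoArc n p) ∧ ArcsDisjoint A ∧
      #(arcsOfLength 1 A) = b₁ ∧ #(arcsOfLength 2 A) = b₂ := by
  classical
  rw [selections, mem_filter, mem_arcSets]
  exact ⟨And.right, fun h => ⟨verts_subset_of_isOneArc_or_isTwoArc h.1, h⟩⟩

lemma lamSel_eq_card : lamSel n b₁ b₂ = #(selections n b₁ b₂) := by
  classical
  rw [lamSel, natCard_eq_card_filter_arcSets fun A hA => verts_subset_of_isOneArc_or_isTwoArc hA.1,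
    selections]
  rfl

lemma snd_le_of_mem_selections (hA : A ∈ selections n b₁ b₂) (p : ℕ × ℕ) (hp : p ∈ A) :
    p.2 ≤ p.1 + 2 := by
  have := isOneArc_or_isTwoArc_iff.1 ((mem_selections.1 hA).1 p hp)
  omega

lemma isMatchingOn_of_mem_selections (hA : A ∈ selections n b₁ b₂) :
    IsMatchingOn (Icc 1 n) A := by
  rw [← isPartialMatching_iff_isMatchingOn]
  refine ⟨fun p hp => ?_, (mem_selections.1 hA).2.1⟩
  have := isOneArc_or_isTwoArc_iff.1 ((mem_selections.1 hA).1 p hp)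
  omega

lemma card_of_mem_selections (hA : A ∈ selections n b₁ b₂) : #A = b₁ + b₂ := by
  obtain ⟨harcs, -, rfl, rfl⟩ := mem_selections.1 hA
  rw [arcsOfLength, arcsOfLength, ← card_union_of_disjoint (disjoint_filter.2 fun _ _ => by omega),
    ← filter_or, filter_true_of_mem fun p hp => (isOneArc_or_isTwoArc_iff.1 (harcs p hp)).2.2]

lemma card_filter_selections_subset (hM : IsMatchingOn (Icc 1 n) M) :
    #{A ∈ selections n b₁ b₂ | A ⊆ M} =
      (#(arcsOfLength 1 M)).choose b₁ * (#(arcsOfLength 2 M)).choose b₂ := by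
  rw [arcsOfLength, arcsOfLength,
    ← card_filter_powerset_filter_or (fun p _ h₁ h₂ => by omega)]
  congr 1
  ext A
  simp only [mem_filter, mem_selections, mem_powerset, arcsOfLength]
  constructor
  · rintro ⟨⟨harcs, -, hb⟩, hAM⟩
    exact ⟨fun p hp => mem_filter.2 ⟨hAM hp, (isOneArc_or_isTwoArc_iff.1 (harcs p hp)).2.2⟩, hb⟩
  · rintro ⟨hA, hb⟩
    have hAM := hA.trans (filter_subset _ M)
    refine ⟨⟨fun p hp => ?_, ArcsDisjoint.mono hM.arcsDisjoint hAM, hb⟩, hAM⟩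
    have h₁ := mem_Icc.1 (hM.verts_subset (fst_mem_verts (hAM hp)))
    have h₂ := mem_Icc.1 (hM.verts_subset (snd_mem_verts (hAM hp)))
    exact isOneArc_or_isTwoArc_iff.2 ⟨h₁.1, h₂.2, (mem_filter.1 (hA hp)).2⟩

lemma expand_mem_kMatchings_iff (hA : IsMatchingOn (Icc 1 n) A) (hshort : ∀ p ∈ A, p.2 < p.1 + k)
    {N : Finset (ℕ × ℕ)} (hN : IsMatchingOn (Icc 1 #(freeVerts n A)) N) :
    expand n A N ∈ kMatchings k n ℓ ↔ N ∈ kMatchings k #(freeVerts n A) ℓ := by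
  simp only [mem_kMatchings, KNoncrossing, hasKCrossing_expand_iff hshort hN,
    isolatedCount_expand hA hN, hA.expand hN, hN, true_and]

lemma card_filter_kMatchings_superset (hA : IsMatchingOn (Icc 1 n) A)
    (hshort : ∀ p ∈ A, p.2 < p.1 + k) :
    #{M ∈ kMatchings k n ℓ | A ⊆ M} = #(kMatchings k (n - 2 * #A) ℓ) := by
  rw [← hA.card_freeVerts]
  refine card_nbij' (contract n A) (expand n A) (fun M hM => ?_) (fun N hN => ?_)
    (fun M hM => ?_) (fun N hN => ?_) <;> simp only [mem_coe, mem_filter] at *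
  · have hM' := (mem_kMatchings.1 hM.1).1
    rw [← expand_mem_kMatchings_iff hA hshort (hM'.contract hM.2), expand_contract hM' hM.2]
    exact hM.1
  · exact ⟨(expand_mem_kMatchings_iff hA hshort (mem_kMatchings.1 hN).1).2 hN,
      subset_union_left⟩
  · exact expand_contract (mem_kMatchings.1 hM.1).1 hM.2
  · exact contract_expand (mem_kMatchings.1 hN).1

lemma sum_choose_mul_choose_GCount₂ :
    ∑ j₁ ∈ Icc b₁ n, ∑ j₂ ∈ Icc b₂ n, j₁.choose b₁ * j₂.choose b₂ * GCount₂ k n ℓ j₁ j₂ =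
      ∑ M ∈ kMatchings k n ℓ,
        (#(arcsOfLength 1 M)).choose b₁ * (#(arcsOfLength 2 M)).choose b₂ := by
  set c : Finset (ℕ × ℕ) → ℕ × ℕ := fun M => (#(arcsOfLength 1 M), #(arcsOfLength 2 M))
  set f : ℕ × ℕ → ℕ := fun j => j.1.choose b₁ * j.2.choose b₂
  calc _ = ∑ j ∈ Icc b₁ n ×ˢ Icc b₂ n, ∑ M ∈ kMatchings k n ℓ with c M = j, f j := by
        simp only [sum_product, GCount₂_eq_card, sum_const, smul_eq_mul, mul_comm, c, f]
    _ = ∑ M ∈ kMatchings k n ℓ with c M ∈ Icc b₁ n ×ˢ Icc b₂ n, f (c M) :=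
        sum_fiberwise_eq_sum_filter' _ _ _ _
    _ = ∑ M ∈ kMatchings k n ℓ, f (c M) := sum_filter_of_ne fun M hM hf => by
        have hM := (mem_kMatchings.1 hM).1
        have h₁ := card_le_card (filter_subset (fun p => p.2 = p.1 + 1) M)
        have h₂ := card_le_card (filter_subset (fun p => p.2 = p.1 + 2) M)
        have := hM.card_verts ▸ card_le_card hM.verts_subset
        simp only [f, c, arcsOfLength, mul_ne_zero_iff, Nat.choose_ne_zero_iff,
          Nat.card_Icc] at hf this
        simp only [c, arcsOfLength, mem_product, mem_Icc]
        omega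

end Counting

end KNoncrossingMatching

/-- For `k > 2` and `b₁, b₂ ≥ 0`:
`Σ_{j₁ ≥ b₁, j₂ ≥ b₂} C(j₁,b₁) C(j₂,b₂) G_k(n,ℓ,j₁,j₂)
  = λ(n,b₁,b₂) f_k(n-2(b₁+b₂), ℓ)`
(the sums are finite since `G_k(n,ℓ,j₁,j₂) = 0` for `j₁ > n` or `j₂ > n`). -/
theorem sum_choose_GCount₂ (k n ℓ b₁ b₂ : ℕ) (hk : 2 < k) :
    ∑ j₁ ∈ Finset.Icc b₁ n, ∑ j₂ ∈ Finset.Icc b₂ n,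
        j₁.choose b₁ * j₂.choose b₂ * GCount₂ k n ℓ j₁ j₂ =
      lamSel n b₁ b₂ * fMatch k (n - 2 * (b₁ + b₂)) ℓ := by
  open KNoncrossingMatching Finset in
  calc _ = ∑ M ∈ kMatchings k n ℓ, #{A ∈ selections n b₁ b₂ | A ⊆ M} := by
        rw [sum_choose_mul_choose_GCount₂]
        exact sum_congr rfl fun M hM =>
          (card_filter_selections_subset (mem_kMatchings.1 hM).1).symm
    _ = ∑ A ∈ selections n b₁ b₂, #{M ∈ kMatchings k n ℓ | A ⊆ M} :=
        (sum_card_bipartiteAbove_eq_sum_card_bipartiteBelow _).symm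
    _ = ∑ _A ∈ selections n b₁ b₂, fMatch k (n - 2 * (b₁ + b₂)) ℓ :=
        sum_congr rfl fun A hA => by
          rw [fMatch_eq_card, ← card_of_mem_selections hA]
          exact card_filter_kMatchings_superset (isMatchingOn_of_mem_selections hA)
            fun p hp => (snd_le_of_mem_selections hA p hp).trans_lt (by omega)
    _ = _ := by rw [sum_const, smul_eq_mul, lamSel_eq_card]
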